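/- arXiv:1904.09542 — 11 statements merged into one kernel-verified Lean document; each statement's English description precedes it below -/
import Mathlib

section
/- Let X be a real vector space, n ≥ 2, and let (·,·|·,...,·) be a weak n-inner product on X. If the vectors x₂,...,xₙ,x are linearly dependent, then (x,y|xₙ,...,x₂) = 0 for every y ∈ X. -/
/-- A weak `n`-inner product on a real vector space `X`, where `n = m + 2 ≥ 2`.
The value `f x y v` represents `(x, y | xₙ, …, x₂)`, where the tuple
`v : Fin (m+1) → X` lists the conditioning vectors `xₙ, x_{n-1}, …, x₂`
(so `v 0 = xₙ`). -/
structure WeakNInner (X : Type*) [AddCommGroup X] [Module ℝ X] (m : ℕ) where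
  f : X → X → (Fin (m + 1) → X) → ℝ
  /-- P1 (positivity) -/
  nonneg : ∀ (x : X) (v : Fin (m + 1) → X), 0 ≤ f x x v
  /-- P1 (definiteness): `(x,x|xₙ,…,x₂) = 0` iff `x, x₂, …, xₙ` are linearly dependent. -/
  eq_zero_iff : ∀ (x : X) (v : Fin (m + 1) → X),
    f x x v = 0 ↔ ¬ LinearIndependent ℝ (Fin.cons x v : Fin (m + 2) → X)
  /-- P2 (interchangeability): `(x,x|xₙ,x_{n-1},…,x₂) = (xₙ,xₙ|x,x_{n-1},…,x₂)`. -/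
  interchange : ∀ (x : X) (v : Fin (m + 1) → X),
    f x x v = f (v 0) (v 0) (Function.update v 0 x)
  /-- P3 (symmetry) -/
  symm : ∀ (x y : X) (v : Fin (m + 1) → X), f x y v = f y x v
  /-- P4 (homogeneity) -/
  smul_left : ∀ (α : ℝ) (x y : X) (v : Fin (m + 1) → X),
    f (α • x) y v = α * f x y v
  /-- P5 (additivity) -/
  add_left : ∀ (x x' y : X) (v : Fin (m + 1) → X),
    f (x + x') y v = f x y v + f x' y v

/-! Once the conditioning vectors are fixed, P3–P5 make `(·, ·|xₙ, …, x₂)` a symmetric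
bilinear form, positive semidefinite by P1, and P1 says that `x` is isotropic for it exactly
when `x, x₂, …, xₙ` are dependent. For an isotropic `x` the quadratic
`t ↦ (x + t y, x + t y) = 2 t (x, y) + t² (y, y)` is nonnegative, so its discriminant
`4 (x, y)²` cannot be positive. -/

namespace LinearMap.BilinForm

lemma apply_add_smul_self_add_smul {R M : Type*} [CommRing R] [AddCommGroup M] [Module R M]
    {B : LinearMap.BilinForm R M} (hB : B.IsSymm) (x y : M) (t : R) :
    B (x + t • y) (x + t • y) = B y y * (t * t) + 2 * B x y * t + B x x := by
  simp only [map_add, map_smul, LinearMap.add_apply, LinearMap.smul_apply, smul_eq_mul,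
    hB.eq y x]
  ring

lemma IsPosSemidef.apply_eq_zero_of_apply_self_eq_zero {K M : Type*} [Field K] [LinearOrder K]
    [IsStrictOrderedRing K] [AddCommGroup M] [Module K M] {B : LinearMap.BilinForm K M}
    (hB : B.IsPosSemidef) {x : M} (hx : B x x = 0) (y : M) : B x y = 0 := by
  have hquad : ∀ t : K, 0 ≤ B y y * (t * t) + 2 * B x y * t + B x x := fun t ↦
    apply_add_smul_self_add_smul hB.isSymm x y t ▸ hB.nonneg (x + t • y)
  have hdisc := discrim_le_zero hquad
  rw [discrim, hx, mul_zero, sub_zero] at hdisc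
  simpa using le_antisymm hdisc (sq_nonneg _)

end LinearMap.BilinForm

namespace WeakNInner

variable {X : Type*} [AddCommGroup X] [Module ℝ X] {m : ℕ} (P : WeakNInner X m)

lemma smul_right (α : ℝ) (x y : X) (v : Fin (m + 1) → X) :
    P.f x (α • y) v = α * P.f x y v := by
  rw [P.symm, P.smul_left, P.symm]

lemma add_right (x y y' : X) (v : Fin (m + 1) → X) :
    P.f x (y + y') v = P.f x y v + P.f x y' v := by
  rw [P.symm, P.add_left, P.symm y, P.symm y']

def bilinForm (v : Fin (m + 1) → X) : LinearMap.BilinForm ℝ X :=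
  LinearMap.mk₂ ℝ (fun x y ↦ P.f x y v) (fun x x' y ↦ P.add_left x x' y v)
    (fun α x y ↦ P.smul_left α x y v) (fun x y y' ↦ P.add_right x y y' v)
    (fun α x y ↦ P.smul_right α x y v)

lemma isPosSemidef_bilinForm (v : Fin (m + 1) → X) : (P.bilinForm v).IsPosSemidef where
  isSymm := ⟨fun x y ↦ P.symm x y v⟩
  isNonneg := ⟨fun x ↦ P.nonneg x v⟩

end WeakNInner

/-- If `x₂, …, xₙ, x` are linearly dependent, then `(x, y | xₙ, …, x₂) = 0`. -/
theorem weakNInner_eq_zero_of_dependent {X : Type*} [AddCommGroup X] [Module ℝ X]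
    {m : ℕ} (P : WeakNInner X m) (x y : X) (v : Fin (m + 1) → X)
    (h : ¬ LinearIndependent ℝ (Fin.cons x v : Fin (m + 2) → X)) :
    P.f x y v = 0 :=
  (P.isPosSemidef_bilinForm v).apply_eq_zero_of_apply_self_eq_zero
    ((P.eq_zero_iff x v).mpr h) y
end

section
/- Let X be a real vector space, n ≥ 2, and let (·,·|·,...,·) be a weak n-inner product on X. Fix x₂,...,xₙ ∈ X and set Y = span{x₂,...,xₙ}. If x, x', y, y' ∈ X satisfy x' − x ∈ Y and y' − y ∈ Y, then (x',y'|xₙ,...,x₂) = (x,y|xₙ,...,x₂); that is, the map ψ(x̂,ŷ) := (x,y|xₙ,...,x₂) is well defined on the quotient X/Y. -/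
/-!
With the conditioning vectors `v` fixed, `(x, y) ↦ (x, y | v)` is a positive semidefinite
symmetric bilinear form, so it satisfies the Cauchy–Schwarz inequality and every vector `z` with
`(z, z | v) = 0` lies in its kernel. By definiteness (P1) this holds for every `z` in the span
of `v`, so changing `x` or `y` by such a vector does not change the value.
-/

namespace WeakNInner

variable {X : Type*} [AddCommGroup X] [Module ℝ X] {m : ℕ} (P : WeakNInner X m)
  (v : Fin (m + 1) → X)

@[reducible] def preInnerCore : PreInnerProductSpace.Core ℝ X where
  inner x y := P.f x y v
  conj_inner_symm x y := P.symm y x v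
  re_inner_nonneg x := P.nonneg x v
  add_left x y z := P.add_left x y z v
  smul_left x y r := P.smul_left r x y v

theorem mul_self_le_mul_self (x y : X) :
    P.f x y v * P.f x y v ≤ P.f x x v * P.f y y v := by
  let := P.preInnerCore v
  have h : ‖P.f x y v‖ * ‖P.f y x v‖ ≤ P.f x x v * P.f y y v :=
    InnerProductSpace.Core.inner_mul_inner_self_le (𝕜 := ℝ) x y
  rwa [P.symm y x, Real.norm_eq_abs, abs_mul_abs_self] at h

theorem eq_zero_of_self_eq_zero {z : X} (hz : P.f z z v = 0) (y : X) : P.f z y v = 0 := by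
  have h := P.mul_self_le_mul_self v z y
  rw [hz, zero_mul] at h
  exact mul_self_eq_zero.mp (le_antisymm h (mul_self_nonneg _))

theorem self_eq_zero_of_mem_span {z : X} (hz : z ∈ Submodule.span ℝ (Set.range v)) :
    P.f z z v = 0 := by
  rw [P.eq_zero_iff, linearIndependent_finCons]
  exact fun h ↦ h.2 hz

theorem add_left_of_mem_span {z : X} (hz : z ∈ Submodule.span ℝ (Set.range v)) (x y : X) :
    P.f (x + z) y v = P.f x y v := by
  rw [P.add_left, P.eq_zero_of_self_eq_zero v (P.self_eq_zero_of_mem_span v hz), add_zero]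

end WeakNInner

/-- The weak `n`-inner product only depends on the first two arguments modulo
`Y = span{x₂, …, xₙ}`: if `x' - x ∈ Y` and `y' - y ∈ Y`, then
`(x',y'|xₙ,…,x₂) = (x,y|xₙ,…,x₂)`.  Hence `ψ(x̂, ŷ) := (x,y|xₙ,…,x₂)` is well
defined on the quotient `X/Y`. -/
theorem weakNInner_well_defined_on_quotient {X : Type*} [AddCommGroup X] [Module ℝ X]
    {m : ℕ} (P : WeakNInner X m) (v : Fin (m + 1) → X) (x x' y y' : X)
    (hx : x' - x ∈ Submodule.span ℝ (Set.range v))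
    (hy : y' - y ∈ Submodule.span ℝ (Set.range v)) :
    P.f x' y' v = P.f x y v := by
  rw [← add_sub_cancel x x', ← add_sub_cancel y y', P.add_left_of_mem_span v hx, P.symm,
    P.add_left_of_mem_span v hy, P.symm]
end

section
/- Let X be a real vector space, n ≥ 2, and let (·,·|·,...,·) be a weak n-inner product on X. Then the induced function ‖x|xₙ,...,x₂‖ := √((x,x|xₙ,...,x₂)) satisfies the triangle inequality: ‖x+y|xₙ,...,x₂‖ ≤ ‖x|xₙ,...,x₂‖ + ‖y|xₙ,...,x₂‖ for all x, y, x₂, ..., xₙ ∈ X. -/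
/-! For fixed conditioning vectors `v`, the map `(x, y) ↦ (x, y | v)` is a symmetric positive
semidefinite bilinear form, i.e. a real pre-inner product on `X`; the triangle inequality is then
that of the seminorm it induces, which rests on Cauchy–Schwarz. -/

namespace WeakNInner

variable {X : Type*} [AddCommGroup X] [Module ℝ X] {m : ℕ}

abbrev preInnerProductSpaceCore (P : WeakNInner X m) (v : Fin (m + 1) → X) :
    PreInnerProductSpace.Core ℝ X where
  inner x y := P.f x y v
  conj_inner_symm x y := P.symm y x v
  re_inner_nonneg x := P.nonneg x v
  add_left x y z := P.add_left x y z v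
  smul_left x y r := P.smul_left r x y v

end WeakNInner

/-- The induced weak `n`-norm `‖x|xₙ,…,x₂‖ := √((x,x|xₙ,…,x₂))` satisfies the
triangle inequality. -/
theorem weakNInner_norm_triangle {X : Type*} [AddCommGroup X] [Module ℝ X]
    {m : ℕ} (P : WeakNInner X m) (x y : X) (v : Fin (m + 1) → X) :
    Real.sqrt (P.f (x + y) (x + y) v) ≤
      Real.sqrt (P.f x x v) + Real.sqrt (P.f y y v) :=
  letI := P.preInnerProductSpaceCore v
  letI := InnerProductSpace.Core.toSeminormedAddCommGroup (𝕜 := ℝ) (F := X)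
  norm_add_le x y
end

section
/- Let X be a real inner product space and n ≥ 2. Then for all x, x₂, ..., xₙ ∈ X, the n-iterated 2-inner product satisfies (x,x|xₙ,...,x₂)_* = 0 if and only if the vectors x, x₂, ..., xₙ are linearly dependent. -/
open scoped InnerProductSpace

/-- The `n`-iterated 2-inner product `(x, y | xₙ, …, x₂)_*` on a real inner
product space, where the list `l = [xₙ, x_{n-1}, …, x₂]` collects the
conditioning vectors (so `n = l.length + 1`).  For the empty list it is the
inner product `⟪x, y⟫` (the convention for `n = 1`), and
`(x, y | xₙ, …, x₂)_* = (x,y|x_{n-1},…,x₂)_* (xₙ,xₙ|x_{n-1},…,x₂)_*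
  - (x,xₙ|x_{n-1},…,x₂)_* (xₙ,y|x_{n-1},…,x₂)_*`.
In particular `(x,y|z)_* = ⟪x,y⟫⟪z,z⟫ - ⟪x,z⟫⟪z,y⟫`. -/
noncomputable def iter2 {X : Type*} [NormedAddCommGroup X] [InnerProductSpace ℝ X] :
    X → X → List X → ℝ
  | x, y, [] => ⟪x, y⟫_ℝ
  | x, y, (z :: l) => iter2 x y l * iter2 z z l - iter2 x z l * iter2 z y l

section Aux

open Submodule Set

variable {X : Type*} [NormedAddCommGroup X] [InnerProductSpace ℝ X]

lemma get_cons_eq (z : X) (l : List X) : (z :: l).get = Fin.cons z l.get := by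
  funext i
  refine Fin.cases ?_ (fun j => ?_) i <;> simp

lemma not_LI_cons_iff (z : X) (l : List X) :
    ¬ LinearIndependent ℝ (z :: l).get ↔
      ∃ g : Fin (l.length + 1) → ℝ,
        (∑ i, g i • (Fin.cons z l.get : Fin (l.length + 1) → X) i) = 0 ∧ ∃ i, g i ≠ 0 := by
  rw [get_cons_eq]
  exact Fintype.not_linearIndependent_iff

lemma not_LI_cons_cons_iff (x z : X) (l : List X) :
    ¬ LinearIndependent ℝ (x :: z :: l).get ↔
      ∃ g : Fin (l.length + 1 + 1) → ℝ,
        (∑ i, g i • (Fin.cons x (Fin.cons z l.get) : Fin (l.length + 1 + 1) → X) i) = 0 ∧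
          ∃ i, g i ≠ 0 := by
  rw [get_cons_eq, get_cons_eq]
  exact Fintype.not_linearIndependent_iff

/-- Key structural lemma: either `l` is linearly dependent and `iter2` vanishes
identically, or `l` is independent and `iter2 a b l = c ⟪P a, P b⟫` for a
positive constant `c` and a map `P` that is "projection off the span of `l`". -/
theorem iter2_key (l : List X) :
    (¬ LinearIndependent ℝ l.get ∧ ∀ a b : X, iter2 a b l = 0) ∨
    (∃ c : ℝ, 0 < c ∧ LinearIndependent ℝ l.get ∧ ∃ P : X → X,
      (∀ a b, iter2 a b l = c * ⟪P a, P b⟫_ℝ) ∧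
      (∀ a, a - P a ∈ span ℝ (Set.range l.get)) ∧
      (∀ a, ∀ u ∈ span ℝ (Set.range l.get), ⟪P a, u⟫_ℝ = 0)) := by
  induction l with
  | nil =>
    right
    haveI : IsEmpty (Fin ([] : List X).length) := by
      rw [List.length_nil]; infer_instance
    refine ⟨1, one_pos, linearIndependent_empty_type, id, ?_, ?_, ?_⟩
    · intro a b; simp [iter2]
    · intro a; simpa using zero_mem _
    · intro a u hu
      simp only [Set.range_eq_empty, span_empty, mem_bot] at hu
      simp [hu]
  | cons z l ih =>
    rcases ih with ⟨hdep, hz⟩ | ⟨c, hc, hLI, P, hform, hsub, hperp⟩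
    · left
      constructor
      · rw [not_LI_cons_iff]
        rw [Fintype.not_linearIndependent_iff] at hdep
        obtain ⟨g, hg, i, hi⟩ := hdep
        refine ⟨Fin.cons 0 g, ?_, i.succ, by simpa using hi⟩
        rw [Fin.sum_univ_succ]
        simpa using hg
      · intro a b; simp [iter2, hz]
    · have hPP : ∀ a b : X, ⟪P a, b⟫_ℝ = ⟪P a, P b⟫_ℝ := by
        intro a b
        have h := hperp a _ (hsub b)
        rw [inner_sub_right] at h
        linarith
      by_cases hzK : z ∈ span ℝ (Set.range l.get)
      · left
        have hPz : P z = 0 :=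
          inner_self_eq_zero.mp ((hPP z z).symm.trans (hperp z z hzK))
        constructor
        · rw [not_LI_cons_iff]
          obtain ⟨f, hf⟩ := (mem_span_range_iff_exists_fun ℝ).mp hzK
          refine ⟨Fin.cons (-1) f, ?_, 0, by simp⟩
          rw [Fin.sum_univ_succ]
          simp only [Fin.cons_zero, Fin.cons_succ, neg_one_smul]
          rw [hf]
          abel
        · intro a b
          simp [iter2, hform, hPz]
      · right
        have hPzne : P z ≠ 0 := by
          intro h
          apply hzK
          have h2 := hsub z
          rwa [h, sub_zero] at h2
        have hPz2 : (0:ℝ) < ⟪P z, P z⟫_ℝ := by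
          rw [real_inner_self_eq_norm_sq]
          exact pow_pos (norm_pos_iff.mpr hPzne) 2
        have hs : ⟪P z, P z⟫_ℝ ≠ 0 := ne_of_gt hPz2
        refine ⟨c ^ 2 * ⟪P z, P z⟫_ℝ, mul_pos (pow_pos hc 2) hPz2, ?_,
          fun a => P a - (⟪P a, P z⟫_ℝ / ⟪P z, P z⟫_ℝ) • P z, ?_, ?_, ?_⟩
        · rw [get_cons_eq]
          exact linearIndependent_fin_cons.mpr ⟨hLI, hzK⟩
        · intro a b
          show iter2 a b l * iter2 z z l - iter2 a z l * iter2 z b l = _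
          rw [hform, hform, hform, hform]
          have hba : ⟪P b, P z⟫_ℝ = ⟪P z, P b⟫_ℝ := real_inner_comm _ _
          simp only [inner_sub_left, inner_sub_right, real_inner_smul_left,
            real_inner_smul_right, hba]
          field_simp
          ring
        · intro a
          have hKK' : span ℝ (Set.range l.get) ≤ span ℝ (Set.range (z :: l).get) := by
            rw [get_cons_eq, Fin.range_cons]
            exact span_mono (Set.subset_insert _ _)
          have hzK' : z ∈ span ℝ (Set.range (z :: l).get) := by
            rw [get_cons_eq, Fin.range_cons]
            exact subset_span (Set.mem_insert _ _)
          have hPzK' : P z ∈ span ℝ (Set.range (z :: l).get) := by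
            rw [← sub_sub_cancel z (P z)]
            exact sub_mem hzK' (hKK' (hsub z))
          have heq : a - (P a - (⟪P a, P z⟫_ℝ / ⟪P z, P z⟫_ℝ) • P z)
              = (a - P a) + (⟪P a, P z⟫_ℝ / ⟪P z, P z⟫_ℝ) • P z := by abel
          rw [heq]
          exact add_mem (hKK' (hsub a)) (smul_mem _ _ hPzK')
        · intro a u hu
          set Qa := P a - (⟪P a, P z⟫_ℝ / ⟪P z, P z⟫_ℝ) • P z with hQa
          have hQK : ∀ v ∈ span ℝ (Set.range l.get), ⟪Qa, v⟫_ℝ = 0 := by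
            intro v hv
            rw [hQa, inner_sub_left, real_inner_smul_left, hperp a v hv, hperp z v hv]
            ring
          have hQz : ⟪Qa, z⟫_ℝ = 0 := by
            have h1 : ⟪Qa, z⟫_ℝ = ⟪Qa, P z⟫_ℝ := by
              have h2 : ⟪Qa, z - P z⟫_ℝ = 0 := hQK _ (hsub z)
              rw [inner_sub_right] at h2
              linarith
            rw [h1, hQa, inner_sub_left, real_inner_smul_left]
            field_simp
            ring
          rw [get_cons_eq, Fin.range_cons] at hu
          have hle : span ℝ (insert z (Set.range l.get)) ≤ (ℝ ∙ Qa)ᗮ := by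
            rw [span_le]
            intro v hv
            rcases Set.mem_insert_iff.mp hv with rfl | hv'
            · rw [SetLike.mem_coe, mem_orthogonal]
              intro w hw
              obtain ⟨r, rfl⟩ := mem_span_singleton.mp hw
              rw [real_inner_smul_left, hQz, mul_zero]
            · rw [SetLike.mem_coe, mem_orthogonal]
              intro w hw
              obtain ⟨r, rfl⟩ := mem_span_singleton.mp hw
              rw [real_inner_smul_left, hQK _ (subset_span hv'), mul_zero]
          exact (mem_orthogonal _ _).mp (hle hu) Qa (mem_span_singleton_self _)

end Aux

/-- Definiteness of the `n`-iterated 2-inner product (`n ≥ 2`):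
`(x, x | xₙ, …, x₂)_* = 0` iff `x, x₂, …, xₙ` are linearly dependent. -/
theorem iter2_self_eq_zero_iff {X : Type*} [NormedAddCommGroup X] [InnerProductSpace ℝ X]
    (x z : X) (l : List X) :
    iter2 x x (z :: l) = 0 ↔ ¬ LinearIndependent ℝ (x :: z :: l).get := by
  rcases iter2_key l with ⟨hdep, hz⟩ | ⟨c, hc, hLI, P, hform, hsub, hperp⟩
  · refine iff_of_true (by simp [iter2, hz]) ?_
    rw [not_LI_cons_cons_iff]
    rw [Fintype.not_linearIndependent_iff] at hdep
    obtain ⟨g, hg, i, hi⟩ := hdep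
    refine ⟨Fin.cons 0 (Fin.cons 0 g), ?_, i.succ.succ, by simpa using hi⟩
    rw [Fin.sum_univ_succ, Fin.sum_univ_succ]
    simpa using hg
  · have hPP : ∀ a b : X, ⟪P a, b⟫_ℝ = ⟪P a, P b⟫_ℝ := by
      intro a b
      have h := hperp a _ (hsub b)
      rw [inner_sub_right] at h
      linarith
    have hval : iter2 x x (z :: l)
        = c ^ 2 * (⟪P x, P x⟫_ℝ * ⟪P z, P z⟫_ℝ - ⟪P x, P z⟫_ℝ * ⟪P x, P z⟫_ℝ) := by
      show iter2 x x l * iter2 z z l - iter2 x z l * iter2 z x l = _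
      rw [hform, hform, hform, hform, real_inner_comm (P z) (P x)]
      ring
    rw [hval]
    have hc2 : c ^ 2 ≠ 0 := by positivity
    rw [mul_eq_zero, or_iff_right hc2, sub_eq_zero]
    constructor
    · -- Cauchy–Schwarz equality ⇒ dependence
      intro hD
      rw [not_LI_cons_cons_iff]
      by_cases hPz : P z = 0
      · -- z ∈ span l
        have hzK : z ∈ Submodule.span ℝ (Set.range l.get) := by
          have h2 := hsub z
          rwa [hPz, sub_zero] at h2
        obtain ⟨f, hf⟩ := (Submodule.mem_span_range_iff_exists_fun ℝ).mp hzK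
        refine ⟨Fin.cons 0 (Fin.cons (-1) f), ?_, 1, by simp⟩
        rw [Fin.sum_univ_succ, Fin.sum_univ_succ]
        simp only [Fin.cons_zero, Fin.cons_succ, neg_one_smul, zero_smul, zero_add]
        rw [hf]
        abel
      · have hPz2 : (0:ℝ) < ⟪P z, P z⟫_ℝ := by
          rw [real_inner_self_eq_norm_sq]
          exact pow_pos (norm_pos_iff.mpr hPz) 2
        have hs : ⟪P z, P z⟫_ℝ ≠ 0 := ne_of_gt hPz2
        set t : ℝ := ⟪P x, P z⟫_ℝ / ⟪P z, P z⟫_ℝ with ht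
        have hu : ⟪P z, P z⟫_ℝ • P x - ⟪P x, P z⟫_ℝ • P z = 0 := by
          rw [← inner_self_eq_zero (𝕜 := ℝ)]
          simp only [inner_sub_left, inner_sub_right, real_inner_smul_left,
            real_inner_smul_right, real_inner_comm (P x) (P z)]
          linear_combination ⟪P z, P z⟫_ℝ * hD
        have hPxt : P x - t • P z = 0 := by
          have h2 : P x - t • P z
              = (⟪P z, P z⟫_ℝ)⁻¹ • (⟪P z, P z⟫_ℝ • P x - ⟪P x, P z⟫_ℝ • P z) := by
            rw [smul_sub, smul_smul, smul_smul, inv_mul_cancel₀ hs, one_smul, ht,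
              inv_mul_eq_div]
          rw [h2, hu, smul_zero]
        have hmem : x - t • z ∈ Submodule.span ℝ (Set.range l.get) := by
          have hxx : x - t • z = (x - P x) - t • (z - P z) + (P x - t • P z) := by
            rw [smul_sub]; abel
          rw [hxx, hPxt, add_zero]
          exact sub_mem (hsub x) (Submodule.smul_mem _ _ (hsub z))
        obtain ⟨f, hf⟩ := (Submodule.mem_span_range_iff_exists_fun ℝ).mp hmem
        refine ⟨Fin.cons (-1) (Fin.cons t f), ?_, 0, by simp⟩
        rw [Fin.sum_univ_succ, Fin.sum_univ_succ]
        simp only [Fin.cons_zero, Fin.cons_succ, neg_one_smul]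
        rw [hf]
        abel
    · -- dependence ⇒ Cauchy–Schwarz equality
      intro hdep
      rw [not_LI_cons_cons_iff] at hdep
      obtain ⟨g, hg, i, hi⟩ := hdep
      rw [Fin.sum_univ_succ, Fin.sum_univ_succ] at hg
      simp only [Fin.cons_zero, Fin.cons_succ] at hg
      set g0 : ℝ := g 0 with hg0
      set g1 : ℝ := g (Fin.succ 0) with hg1
      set w : X := ∑ i : Fin l.length, g i.succ.succ • l.get i with hw
      have hwK : w ∈ Submodule.span ℝ (Set.range l.get) := by
        refine Submodule.sum_mem _ fun j _ => Submodule.smul_mem _ _ ?_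
        exact Submodule.subset_span (Set.mem_range_self j)
      -- hg : g0 • x + (g1 • z + w) = 0
      have heq1 : g0 * ⟪P x, P x⟫_ℝ + g1 * ⟪P x, P z⟫_ℝ = 0 := by
        have h := congrArg (fun v => ⟪P x, v⟫_ℝ) hg
        simp only [inner_add_right, real_inner_smul_right, inner_zero_right] at h
        rw [hperp x w hwK, hPP x x, hPP x z] at h
        linarith
      have heq2 : g0 * ⟪P x, P z⟫_ℝ + g1 * ⟪P z, P z⟫_ℝ = 0 := by
        have h := congrArg (fun v => ⟪P z, v⟫_ℝ) hg
        simp only [inner_add_right, real_inner_smul_right, inner_zero_right] at h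
        rw [hperp z w hwK, hPP z x, hPP z z, real_inner_comm (P x) (P z)] at h
        linarith
      by_cases h0 : g0 = 0
      · by_cases h1 : g1 = 0
        · -- contradiction with independence of l
          exfalso
          have hw0 : ∑ j : Fin l.length, g j.succ.succ • l.get j = 0 := by
            have := hg
            rw [h0, h1] at this
            rw [zero_smul, zero_smul, zero_add, zero_add] at this
            exact this
          have hj : ∃ j : Fin l.length, g j.succ.succ ≠ 0 := by
            rcases Fin.eq_zero_or_eq_succ i with rfl | ⟨i', rfl⟩
            · exact absurd (by rw [← hg0]; exact h0) hi
            · rcases Fin.eq_zero_or_eq_succ i' with rfl | ⟨j, rfl⟩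
              · exact absurd (by rw [← hg1]; exact h1) hi
              · exact ⟨j, hi⟩
          obtain ⟨j, hj⟩ := hj
          exact (Fintype.not_linearIndependent_iff.mpr
            ⟨fun j => g j.succ.succ, hw0, j, hj⟩) hLI
        · -- g0 = 0, g1 ≠ 0 : ⟪Pz,Pz⟫ = 0 and ⟪Px,Pz⟫ = 0
          have e1 : ⟪P x, P z⟫_ℝ = 0 :=
            (mul_eq_zero.mp (by linear_combination heq1 - ⟪P x, P x⟫_ℝ * h0 : g1 * ⟪P x, P z⟫_ℝ = 0)).resolve_left h1
          have e2 : ⟪P z, P z⟫_ℝ = 0 :=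
            (mul_eq_zero.mp (by linear_combination heq2 - ⟪P x, P z⟫_ℝ * h0 : g1 * ⟪P z, P z⟫_ℝ = 0)).resolve_left h1
          rw [e1, e2]; ring
      · have key : g0 * (⟪P x, P x⟫_ℝ * ⟪P z, P z⟫_ℝ - ⟪P x, P z⟫_ℝ * ⟪P x, P z⟫_ℝ) = 0 := by
          linear_combination ⟪P z, P z⟫_ℝ * heq1 - ⟪P x, P z⟫_ℝ * heq2
        rcases mul_eq_zero.mp key with h | h
        · exact absurd h h0
        · linarith
end

section
/- Let X be a real inner product space and n ≥ 2. Then for all x, y, x₂, ..., xₙ ∈ X, the n-iterated 2-inner product satisfies the Cauchy–Schwarz inequality ((x,y|xₙ,...,x₂)_*)² ≤ (x,x|xₙ,...,x₂)_* · (y,y|xₙ,...,x₂)_*. -/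
/-!
For a fixed list `l`, `iter2 · · l` is a symmetric bilinear form. Its diagonal at `z :: l`,
`iter2 w w l * iter2 z z l - iter2 w z l * iter2 z w l`, is the Cauchy–Schwarz defect of the
form at `l`, so by induction on `l` every form is positive semidefinite, and the Cauchy–Schwarz
inequality for positive semidefinite bilinear forms applies at every level.
-/

open scoped InnerProductSpace

section Iter2

variable {X : Type*} [NormedAddCommGroup X] [InnerProductSpace ℝ X]

theorem iter2_comm (x y : X) (l : List X) : iter2 x y l = iter2 y x l := by
  induction l generalizing x y with
  | nil => exact real_inner_comm y x
  | cons z l ih =>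
    simp only [iter2]
    rw [ih x y, ih x z, ih z y]
    ring

theorem iter2_add_left (x x' y : X) (l : List X) :
    iter2 (x + x') y l = iter2 x y l + iter2 x' y l := by
  induction l generalizing x x' y with
  | nil => exact inner_add_left x x' y
  | cons z l ih => simp only [iter2, ih]; ring

theorem iter2_smul_left (t : ℝ) (x y : X) (l : List X) :
    iter2 (t • x) y l = t * iter2 x y l := by
  induction l generalizing x y with
  | nil => exact real_inner_smul_left x y t
  | cons z l ih => simp only [iter2, ih]; ring

theorem iter2_add_right (x y y' : X) (l : List X) :
    iter2 x (y + y') l = iter2 x y l + iter2 x y' l := by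
  rw [iter2_comm, iter2_add_left, iter2_comm y, iter2_comm y']

theorem iter2_smul_right (t : ℝ) (x y : X) (l : List X) :
    iter2 x (t • y) l = t * iter2 x y l := by
  rw [iter2_comm, iter2_smul_left, iter2_comm y]

variable (X) in
noncomputable def iter2BilinForm (l : List X) : LinearMap.BilinForm ℝ X :=
  LinearMap.mk₂ ℝ (fun x y ↦ iter2 x y l) (fun x x' y ↦ iter2_add_left x x' y l)
    (fun t x y ↦ iter2_smul_left t x y l) (fun x y y' ↦ iter2_add_right x y y' l)
    (fun t x y ↦ iter2_smul_right t x y l)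

theorem iter2_self_nonneg (w : X) (l : List X) : 0 ≤ iter2 w w l := by
  induction l generalizing w with
  | nil => exact real_inner_self_nonneg
  | cons z l ih =>
    exact sub_nonneg.2 <|
      (iter2BilinForm X l).apply_mul_apply_le_of_forall_zero_le ih w z

theorem iter2_sq_le_mul (x y : X) (l : List X) :
    iter2 x y l ^ 2 ≤ iter2 x x l * iter2 y y l := by
  calc iter2 x y l ^ 2 = iter2 x y l * iter2 y x l := by rw [sq, iter2_comm y x]
    _ ≤ iter2 x x l * iter2 y y l :=
      (iter2BilinForm X l).apply_mul_apply_le_of_forall_zero_le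
        (fun w ↦ iter2_self_nonneg w l) x y

end Iter2

/-- Cauchy–Schwarz inequality for the `n`-iterated 2-inner product (`n ≥ 2`):
`((x, y | xₙ, …, x₂)_*)² ≤ (x, x | xₙ, …, x₂)_* · (y, y | xₙ, …, x₂)_*`. -/
theorem iter2_cauchy_schwarz {X : Type*} [NormedAddCommGroup X] [InnerProductSpace ℝ X]
    (x y z : X) (l : List X) :
    (iter2 x y (z :: l)) ^ 2 ≤ iter2 x x (z :: l) * iter2 y y (z :: l) :=
  iter2_sq_le_mul x y (z :: l)
end

section
/- (Dodgson/Desnanot–Jacobi type identity) Let n ≥ 3 and let A be an n×n matrix over a commutative ring. Let M₀ be the determinant of the submatrix of A obtained using rows 1,...,n−2 and columns 1,...,n−2; let M₁ be the determinant of the submatrix using rows 1,...,n−1 and columns 1,...,n−1; let M₂ be the determinant of the submatrix using rows 1,...,n−2,n−1 and columns 1,...,n−2,n; let M₃ be the determinant of the submatrix using rows 1,...,n−2,n and columns 1,...,n−1; let M₄ be the determinant of the submatrix using rows 1,...,n−2,n and columns 1,...,n−2,n. Then M₀ · det A = M₁·M₄ − M₂·M₃. -/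
open Matrix

private def fir (m : ℕ) : Fin (m + 1) → Fin (m + 3) := fun i => ⟨i, by omega⟩
private def fsnd (m : ℕ) : Fin (m + 2) → Fin (m + 3) := fun i => ⟨i, by omega⟩
private def flst (m : ℕ) : Fin (m + 2) → Fin (m + 3) :=
  fun i => if (i : ℕ) < m + 1 then ⟨i, by omega⟩ else ⟨m + 2, by omega⟩

private lemma dodgson_aux {R : Type*} [CommRing R] [IsDomain R] (m : ℕ)
    (A : Matrix (Fin (m + 3)) (Fin (m + 3)) R) (hA : A.det ≠ 0) :
    (A.submatrix (fir m) (fir m)).det * A.det =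
      (A.submatrix (fsnd m) (fsnd m)).det * (A.submatrix (flst m) (flst m)).det
      - (A.submatrix (fsnd m) (flst m)).det * (A.submatrix (flst m) (fsnd m)).det := by
  classical
  set B : Matrix (Fin (m + 3)) (Fin (m + 3)) R :=
    Matrix.of fun i j => if (j : ℕ) < m + 1 then (1 : Matrix (Fin (m+3)) (Fin (m+3)) R) i j
      else adjugate A i j with hB
  -- A * B entries
  have hAB : A * B = Matrix.of fun i (j : Fin (m+3)) => if (j : ℕ) < m + 1 then A i j
      else A.det * (1 : Matrix (Fin (m+3)) (Fin (m+3)) R) i j := by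
    ext i j
    by_cases h : (j : ℕ) < m + 1
    · simp [Matrix.mul_apply, hB, h, Matrix.one_apply, mul_ite, (by omega : (j : ℕ) ≤ m)]
    · have h2 := congrFun (congrFun (Matrix.mul_adjugate A) i) j
      simp only [Matrix.mul_apply, Matrix.smul_apply, smul_eq_mul] at h2
      simp [Matrix.mul_apply, hB, h, h2, (show ((j : ℕ) ≤ m) ↔ False from ⟨fun h' => h (by omega), False.elim⟩)]
  -- determinant of A * B via block decomposition
  have key : ∀ (M : Matrix (Fin (m+3)) (Fin (m+3)) R)
      (P : Matrix (Fin (m+1)) (Fin (m+1)) R) (Q : Matrix (Fin (m+1)) (Fin 2) R)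
      (C : Matrix (Fin 2) (Fin (m+1)) R) (D : Matrix (Fin 2) (Fin 2) R),
      (∀ i j, M (finSumFinEquiv (m := m + 1) (n := 2) (Sum.inl i)) (finSumFinEquiv (m := m + 1) (n := 2) (Sum.inl j)) = P i j) →
      (∀ i j, M (finSumFinEquiv (m := m + 1) (n := 2) (Sum.inl i)) (finSumFinEquiv (m := m + 1) (n := 2) (Sum.inr j)) = Q i j) →
      (∀ i j, M (finSumFinEquiv (m := m + 1) (n := 2) (Sum.inr i)) (finSumFinEquiv (m := m + 1) (n := 2) (Sum.inl j)) = C i j) →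
      (∀ i j, M (finSumFinEquiv (m := m + 1) (n := 2) (Sum.inr i)) (finSumFinEquiv (m := m + 1) (n := 2) (Sum.inr j)) = D i j) →
      M.det = (Matrix.fromBlocks P Q C D).det := by
    intro M P Q C D h1 h2 h3 h4
    simp only [finSumFinEquiv_apply_left, finSumFinEquiv_apply_right] at h1 h2 h3 h4
    rw [← Matrix.det_submatrix_equiv_self (finSumFinEquiv :
      Fin (m+1) ⊕ Fin 2 ≃ Fin (m+3)) M]
    congr 1
    ext i j
    rcases i with i | i <;> rcases j with j | j <;>
      simp [h1, h2, h3, h4]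
  have hil : ∀ i : Fin (m+1), (finSumFinEquiv (m := m + 1) (n := 2) (Sum.inl i) : Fin (m+3)) = fir m i := by
    intro i; simp [finSumFinEquiv_apply_left, fir, Fin.ext_iff]
  have hir : ∀ k : Fin 2, ((finSumFinEquiv (m := m + 1) (n := 2) (Sum.inr k) : Fin (m+3)) : ℕ) = m + 1 + k := by
    intro k; simp [finSumFinEquiv_apply_right]
  have hABdet : (A * B).det = (A.submatrix (fir m) (fir m)).det * (A.det * A.det) := by
    rw [key (A * B) (A.submatrix (fir m) (fir m)) 0
      (Matrix.of fun k j => A (finSumFinEquiv (m := m + 1) (n := 2) (Sum.inr k)) (fir m j))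
      (A.det • (1 : Matrix (Fin 2) (Fin 2) R))]
    · rw [Matrix.det_fromBlocks_zero₁₂, Matrix.det_smul, Matrix.det_one,
        Fintype.card_fin]
      ring
    · intro i j
      rw [hAB]
      simp only [Matrix.of_apply, Matrix.submatrix_apply]
      rw [if_pos (by rw [hil]; exact j.isLt), hil, hil]
    · intro i j
      rw [hAB]
      simp only [Matrix.of_apply]
      rw [if_neg (by rw [hir]; omega)]
      have hne : (finSumFinEquiv (m := m + 1) (n := 2) (Sum.inl i) : Fin (m+3)) ≠
          finSumFinEquiv (m := m + 1) (n := 2) (Sum.inr j) := by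
        rw [Ne, Fin.ext_iff, hil, hir]
        show ¬ ((i : ℕ) = m + 1 + (j : ℕ))
        omega
      rw [Matrix.one_apply_ne hne, mul_zero]
      rfl
    · intro i j
      rw [hAB]
      simp only [Matrix.of_apply, Matrix.submatrix_apply]
      rw [if_pos (by rw [hil]; exact j.isLt), hil]
    · intro i j
      rw [hAB]
      simp only [Matrix.of_apply]
      rw [if_neg (by rw [hir]; omega)]
      have heq : ((finSumFinEquiv (m := m + 1) (n := 2) (Sum.inr i) : Fin (m+3)) =
          finSumFinEquiv (m := m + 1) (n := 2) (Sum.inr j)) ↔ i = j := by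
        rw [EmbeddingLike.apply_eq_iff_eq, Sum.inr.injEq]
      by_cases h : i = j
      · subst h
        rw [Matrix.one_apply_eq, Matrix.smul_apply, Matrix.one_apply_eq, smul_eq_mul, mul_one]
      · rw [Matrix.one_apply_ne (fun hh => h (heq.mp hh)), mul_zero,
          Matrix.smul_apply, Matrix.one_apply_ne h, smul_eq_mul, mul_zero]
  -- determinant of B via block decomposition and adjugate minors
  have hone : ∀ i j : Fin (m+1),
      (1 : Matrix (Fin (m+3)) (Fin (m+3)) R)
        (finSumFinEquiv (m := m + 1) (n := 2) (Sum.inl i))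
        (finSumFinEquiv (m := m + 1) (n := 2) (Sum.inl j))
      = (1 : Matrix (Fin (m+1)) (Fin (m+1)) R) i j := by
    intro i j
    by_cases h : i = j
    · subst h; rw [Matrix.one_apply_eq, Matrix.one_apply_eq]
    · rw [Matrix.one_apply_ne (by
        rw [Ne, EmbeddingLike.apply_eq_iff_eq, Sum.inl.injEq]; exact h),
        Matrix.one_apply_ne h]
  set p : Fin (m + 3) := ⟨m + 1, by omega⟩ with hpdef
  set q : Fin (m + 3) := ⟨m + 2, by omega⟩ with hqdef
  have hfr0 : (finSumFinEquiv (m := m + 1) (n := 2) (Sum.inr 0) : Fin (m+3)) = p := by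
    rw [Fin.ext_iff, hir]; rfl
  have hfr1 : (finSumFinEquiv (m := m + 1) (n := 2) (Sum.inr 1) : Fin (m+3)) = q := by
    rw [Fin.ext_iff, hir]; rfl
  have hadj : ∀ i j : Fin (m + 3), adjugate A i j =
      (-1) ^ ((j : ℕ) + (i : ℕ)) * Matrix.det (A.submatrix (Fin.succAbove j) (Fin.succAbove i)) :=
    fun i j => Matrix.adjugate_fin_succ_eq_det_submatrix A i j
  have hsp : Fin.succAbove p = flst m := by
    funext k
    rw [Fin.succAbove, flst]
    by_cases hk : (k : ℕ) < m + 1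
    · rw [if_pos (by rw [Fin.lt_def]; exact hk), if_pos hk]
      exact Fin.ext rfl
    · rw [if_neg (by rw [Fin.lt_def]; exact hk), if_neg hk]
      have := k.isLt
      exact Fin.ext (by show (k : ℕ) + 1 = m + 2; omega)
  have hsq : Fin.succAbove q = fsnd m := by
    funext k
    rw [Fin.succAbove, if_pos (by rw [Fin.lt_def]; exact k.isLt)]
    exact Fin.ext rfl
  have hpp : adjugate A p p = (A.submatrix (flst m) (flst m)).det := by
    rw [hadj, hsp]
    have : Even ((p : ℕ) + (p : ℕ)) := ⟨(p : ℕ), by ring⟩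
    rw [this.neg_one_pow, one_mul]
  have hqq : adjugate A q q = (A.submatrix (fsnd m) (fsnd m)).det := by
    rw [hadj, hsq]
    have : Even ((q : ℕ) + (q : ℕ)) := ⟨(q : ℕ), by ring⟩
    rw [this.neg_one_pow, one_mul]
  have hpq : adjugate A p q = -(A.submatrix (fsnd m) (flst m)).det := by
    rw [hadj, hsq, hsp]
    have : Odd ((q : ℕ) + (p : ℕ)) := ⟨m + 1, by show m + 2 + (m + 1) = _; ring⟩
    rw [this.neg_one_pow, neg_one_mul]
  have hqp : adjugate A q p = -(A.submatrix (flst m) (fsnd m)).det := by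
    rw [hadj, hsp, hsq]
    have : Odd ((p : ℕ) + (q : ℕ)) := ⟨m + 1, by show m + 1 + (m + 2) = _; ring⟩
    rw [this.neg_one_pow, neg_one_mul]
  have hBdet : B.det =
      (A.submatrix (fsnd m) (fsnd m)).det * (A.submatrix (flst m) (flst m)).det
      - (A.submatrix (fsnd m) (flst m)).det * (A.submatrix (flst m) (fsnd m)).det := by
    rw [key B 1
      (Matrix.of fun i k => adjugate A (finSumFinEquiv (m := m + 1) (n := 2) (Sum.inl i))
        (finSumFinEquiv (m := m + 1) (n := 2) (Sum.inr k))) 0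
      (Matrix.of fun k l => adjugate A (finSumFinEquiv (m := m + 1) (n := 2) (Sum.inr k))
        (finSumFinEquiv (m := m + 1) (n := 2) (Sum.inr l)))]
    · rw [Matrix.det_fromBlocks_zero₂₁, Matrix.det_one, one_mul, Matrix.det_fin_two]
      simp only [Matrix.of_apply, hfr0, hfr1, hpp, hqq, hpq, hqp]
      ring
    · intro i j
      show (if (↑(finSumFinEquiv (m := m + 1) (n := 2) (Sum.inl j)) : ℕ) < m + 1 then _ else _) = _
      rw [if_pos (by rw [hil]; exact j.isLt)]
      exact hone i j
    · intro i j
      show (if (↑(finSumFinEquiv (m := m + 1) (n := 2) (Sum.inr j)) : ℕ) < m + 1 then _ else _) = _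
      rw [if_neg (by rw [hir]; omega)]
      rfl
    · intro i j
      show (if (↑(finSumFinEquiv (m := m + 1) (n := 2) (Sum.inl j)) : ℕ) < m + 1 then _ else _) = _
      rw [if_pos (by rw [hil]; exact j.isLt)]
      rw [Matrix.one_apply_ne (by
        rw [Ne, Fin.ext_iff, hir, hil]
        show ¬ (m + 1 + (i : ℕ) = (j : ℕ))
        have := j.isLt
        omega)]
      rfl
    · intro i j
      show (if (↑(finSumFinEquiv (m := m + 1) (n := 2) (Sum.inr j)) : ℕ) < m + 1 then _ else _) = _
      rw [if_neg (by rw [hir]; omega)]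
      rfl
  -- combine
  have h5 : A.det * B.det = A.det * (A.det * (A.submatrix (fir m) (fir m)).det) := by
    rw [← Matrix.det_mul, hABdet]; ring
  have h6 : B.det = A.det * (A.submatrix (fir m) (fir m)).det := mul_left_cancel₀ hA h5
  rw [← hBdet, h6]; ring

/-- Dodgson/Desnanot–Jacobi type identity: for an `n × n` matrix `A` over a
commutative ring (`n ≥ 3`), let `M₀` be the minor on rows and columns
`1, …, n-2`; `M₁` the minor on rows and columns `1, …, n-1`; `M₂` the minor on
rows `1, …, n-1` and columns `1, …, n-2, n`; `M₃` the minor on rows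
`1, …, n-2, n` and columns `1, …, n-1`; `M₄` the minor on rows `1, …, n-2, n`
and columns `1, …, n-2, n`.  Then `M₀ · det A = M₁ · M₄ - M₂ · M₃`. -/
theorem dodgson_identity {R : Type*} [CommRing R] {n : ℕ} (hn : 3 ≤ n)
    (A : Matrix (Fin n) (Fin n) R) :
    -- rows/columns `1, …, n-2`, i.e. dropping the last two
    let first : Fin (n - 2) → Fin n := fun i => ⟨i, by omega⟩
    -- rows/columns `1, …, n-1`, i.e. dropping the last one
    let firstSnd : Fin (n - 1) → Fin n := fun i => ⟨i, by omega⟩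
    -- rows/columns `1, …, n-2, n`, i.e. dropping the next-to-last one
    let firstLast : Fin (n - 1) → Fin n :=
      fun i => if (i : ℕ) < n - 2 then ⟨i, by omega⟩ else ⟨n - 1, by omega⟩
    let M₀ : R := (A.submatrix first first).det
    let M₁ : R := (A.submatrix firstSnd firstSnd).det
    let M₂ : R := (A.submatrix firstSnd firstLast).det
    let M₃ : R := (A.submatrix firstLast firstSnd).det
    let M₄ : R := (A.submatrix firstLast firstLast).det
    M₀ * A.det = M₁ * M₄ - M₂ * M₃ := by
  intro first firstSnd firstLast M₀ M₁ M₂ M₃ M₄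
  obtain ⟨m, rfl⟩ : ∃ m, n = m + 3 := ⟨n - 3, by omega⟩
  classical
  set S := MvPolynomial (Fin (m + 3) × Fin (m + 3)) ℤ with hS
  set G : Matrix (Fin (m + 3)) (Fin (m + 3)) S :=
    Matrix.of fun i j => MvPolynomial.X (i, j) with hG
  have hGdet : G.det ≠ 0 := by
    intro h
    have h2 := congrArg
      (MvPolynomial.eval (fun p : Fin (m + 3) × Fin (m + 3) => if p.1 = p.2 then (1 : ℤ) else 0)) h
    rw [map_zero, RingHom.map_det, RingHom.mapMatrix_apply] at h2
    have hone : G.map (MvPolynomial.eval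
        (fun p : Fin (m + 3) × Fin (m + 3) => if p.1 = p.2 then (1 : ℤ) else 0)) =
        (1 : Matrix (Fin (m + 3)) (Fin (m + 3)) ℤ) := by
      ext i j
      by_cases hij : i = j
      · subst hij
        simp [hG, Matrix.map_apply, Matrix.one_apply]
      · simp [hG, Matrix.map_apply, Matrix.one_apply, hij]
    rw [hone, Matrix.det_one] at h2
    exact one_ne_zero h2
  set φ : S →+* R := MvPolynomial.eval₂Hom (Int.castRingHom R) (fun p => A p.1 p.2) with hφ
  have hmap : ∀ (a : ℕ) (f g : Fin a → Fin (m + 3)),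
      φ ((G.submatrix f g).det) = (A.submatrix f g).det := by
    intro a f g
    rw [RingHom.map_det, RingHom.mapMatrix_apply]
    congr 1
    ext i j
    simp only [hφ, hG, Matrix.map_apply, Matrix.submatrix_apply, Matrix.of_apply]
    exact MvPolynomial.eval₂Hom_X' _ _ _
  have hdet : φ G.det = A.det := by
    rw [RingHom.map_det, RingHom.mapMatrix_apply]
    congr 1
    ext i j
    simp only [hφ, hG, Matrix.map_apply, Matrix.submatrix_apply, Matrix.of_apply]
    exact MvPolynomial.eval₂Hom_X' _ _ _
  have key := dodgson_aux m G hGdet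
  have h2 := congrArg φ key
  rw [map_sub, _root_.map_mul, _root_.map_mul, _root_.map_mul, hmap, hmap, hmap, hmap, hmap, hdet] at h2
  exact h2
end

section
/- Let X be a real inner product space and n ≥ 2, and let x, y, x₂, ..., xₙ ∈ X. Then the n-iterated 2-inner product is represented in terms of standard k-inner products as (x,y|xₙ,...,x₂)_* = Eₙ · ⟨x,y|xₙ,...,x₂⟩, where E₂ = 1 and, for n ≥ 3, Eₙ = ∏_{k=2}^{n−1} ⟨xₖ,xₖ|x_{k−1},...,x₂⟩^(2^{n−k−1}) (with the convention ⟨x₂,x₂|⟩ = ⟨x₂,x₂⟩ for k = 2). -/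
open scoped InnerProductSpace

/-- The standard `n`-inner product `⟨x, y | x₂, …, xₙ⟩` on a real inner product
space, given by the determinant of the `n × n` matrix whose first row is
`(⟪x,y⟫, ⟪x,x₂⟫, …, ⟪x,xₙ⟫)` and whose `i`-th row (`2 ≤ i ≤ n`) is
`(⟪xᵢ,y⟫, ⟪xᵢ,x₂⟫, …, ⟪xᵢ,xₙ⟫)`.  The list `l` collects the conditioning
vectors `x₂, …, xₙ` (the determinant is invariant under their order);
for `l = []` it is `⟪x, y⟫`. -/
noncomputable def stdNInner {X : Type*} [NormedAddCommGroup X] [InnerProductSpace ℝ X]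
    (x y : X) (l : List X) : ℝ :=
  Matrix.det (Matrix.of fun i j : Fin (l.length + 1) =>
    ⟪(x :: l).get i, (y :: l).get j⟫_ℝ)

/-!
The identity comes from Sylvester's determinant identity for bordered Gram-type matrices: writing
`Γ(l)` for the Gram determinant of `l`,
`⟨x, y | z :: l⟩ Γ(l) = ⟨x, y | l⟩ ⟨z, z | l⟩ - ⟨x, z | l⟩ ⟨z, y | l⟩`.
If `Γ(l) ≠ 0`, the Schur complement of the Gram block of `l` turns both sides into `Γ(l)²` times
the same `2 × 2` determinant; if `Γ(l) = 0`, the vectors of `l` are dependent and every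
determinant in sight vanishes. Substituting the identity into the recursion defining the
iterated product, the coefficient picks up one factor `⟨w, w | t⟩` and is squared at each step.
-/

open Matrix

theorem List.get_cons_eq_finCons {α : Type*} (x : α) (l : List α) :
    (x :: l).get = (Fin.cons x l.get : Fin (l.length + 1) → α) := by
  funext i
  refine Fin.cases ?_ (fun i => ?_) i <;> simp

section

variable {X : Type*} [NormedAddCommGroup X] [InnerProductSpace ℝ X]

noncomputable def innerMatrix {ι κ : Type*} (f : ι → X) (g : κ → X) : Matrix ι κ ℝ :=
  Matrix.of fun i j => ⟪f i, g j⟫_ℝ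

theorem det_innerMatrix_eq_zero {ι : Type*} [Fintype ι] [DecidableEq ι] {f : ι → X}
    (hf : ¬LinearIndependent ℝ f) (g : ι → X) : (innerMatrix f g).det = 0 := by
  obtain ⟨c, hc, i, hci⟩ := Fintype.not_linearIndependent_iff.mp hf
  refine exists_vecMul_eq_zero_iff.mp ⟨c, fun h => hci (congrFun h i), funext fun j => ?_⟩
  simpa [vecMul, dotProduct, innerMatrix, real_inner_smul_left, sum_inner] using
    congrArg (⟪·, g j⟫_ℝ) hc

theorem det_innerMatrix_comp_equiv {ι ι' : Type*} [Fintype ι] [DecidableEq ι] [Fintype ι']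
    [DecidableEq ι'] (e : ι' ≃ ι) (f g : ι → X) :
    (innerMatrix (f ∘ e) (g ∘ e)).det = (innerMatrix f g).det :=
  det_submatrix_equiv_self e (innerMatrix f g)

/-- For `N` the inverse Gram matrix of `r`, this is the inner product of the components of `a`
and `b` orthogonal to the span of `r`. -/
noncomputable def schurInner {ι : Type*} [Fintype ι] (r : ι → X) (N : Matrix ι ι ℝ)
    (a b : X) : ℝ :=
  ⟪a, b⟫_ℝ - ∑ i, ∑ j, ⟪a, r i⟫_ℝ * N i j * ⟪r j, b⟫_ℝ

theorem det_innerMatrix_append {k m : ℕ} (u v : Fin k → X) (r : Fin m → X)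
    [Invertible (gram ℝ r)] :
    (innerMatrix (Fin.append u r) (Fin.append v r)).det =
      (gram ℝ r).det * (Matrix.of fun i j => schurInner r ⅟(gram ℝ r) (u i) (v j)).det := by
  have hblocks : (innerMatrix (Fin.append u r) (Fin.append v r)).submatrix
      finSumFinEquiv finSumFinEquiv =
      fromBlocks (innerMatrix u v) (innerMatrix u r) (innerMatrix r v) (gram ℝ r) := by
    ext (i | i) (j | j) <;> simp [innerMatrix, gram]
  rw [← det_submatrix_equiv_self finSumFinEquiv, hblocks, det_fromBlocks₂₂]
  congr 2
  ext i j
  simp only [Matrix.sub_apply, mul_apply, Finset.sum_mul, innerMatrix, schurInner, of_apply]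
  rw [Finset.sum_comm]

variable {m : ℕ}

theorem det_innerMatrix_cons (a b : X) (r : Fin m → X) [Invertible (gram ℝ r)] :
    (innerMatrix (Fin.cons a r : Fin (m + 1) → X) (Fin.cons b r)).det =
      (gram ℝ r).det * schurInner r ⅟(gram ℝ r) a b := by
  have hcast (c : X) : (Fin.cons c r : Fin (m + 1) → X) ∘ finCongr (Nat.add_comm 1 m) =
      Fin.append ![c] r := (Fin.append_left_eq_cons ![c] r).symm
  rw [← det_innerMatrix_comp_equiv (finCongr (Nat.add_comm 1 m)), hcast, hcast, det_innerMatrix_append, det_fin_one]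
  rfl

theorem det_innerMatrix_cons_cons (x y z : X) (r : Fin m → X) [Invertible (gram ℝ r)] :
    (innerMatrix (Fin.cons x (Fin.cons z r) : Fin (m + 2) → X) (Fin.cons y (Fin.cons z r))).det =
      (gram ℝ r).det * (schurInner r ⅟(gram ℝ r) x y * schurInner r ⅟(gram ℝ r) z z -
        schurInner r ⅟(gram ℝ r) x z * schurInner r ⅟(gram ℝ r) z y) := by
  have hcast (c : X) : (Fin.cons c (Fin.cons z r) : Fin (m + 2) → X) ∘
      finCongr (Nat.add_comm 2 m) = Fin.append ![c, z] r := by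
    ext i
    refine Fin.addCases (fun i => ?_) (fun i => ?_) i
    · fin_cases i <;> rfl
    · have hi : finCongr (Nat.add_comm 2 m) (Fin.natAdd 2 i) = i.succ.succ := by
        ext
        simp only [finCongr_apply, Fin.val_cast, Fin.val_natAdd, Fin.val_succ]
        omega
      simp [hi, Fin.append_right]
  rw [← det_innerMatrix_comp_equiv (finCongr (Nat.add_comm 2 m)), hcast, hcast, det_innerMatrix_append, det_fin_two]
  rfl

theorem det_innerMatrix_cons_cons_mul_det_gram (x y z : X) (r : Fin m → X) :
    (innerMatrix (Fin.cons x (Fin.cons z r) : Fin (m + 2) → X) (Fin.cons y (Fin.cons z r))).det *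
        (gram ℝ r).det =
      (innerMatrix (Fin.cons x r : Fin (m + 1) → X) (Fin.cons y r)).det *
          (innerMatrix (Fin.cons z r : Fin (m + 1) → X) (Fin.cons z r)).det -
        (innerMatrix (Fin.cons x r : Fin (m + 1) → X) (Fin.cons z r)).det *
          (innerMatrix (Fin.cons z r : Fin (m + 1) → X) (Fin.cons y r)).det := by
  by_cases hr : LinearIndependent ℝ r
  · have : Invertible (gram ℝ r) :=
      (gram ℝ r).invertibleOfIsUnitDet (det_gram_ne_zero_iff_linearIndependent.mpr hr).isUnit
    rw [det_innerMatrix_cons_cons, det_innerMatrix_cons, det_innerMatrix_cons,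
      det_innerMatrix_cons, det_innerMatrix_cons]
    ring
  · have hcons (a : X) : ¬LinearIndependent ℝ (Fin.cons a r : Fin (m + 1) → X) :=
      fun h => hr (linearIndependent_finCons.mp h).1
    rw [← det_gram_ne_zero_iff_linearIndependent, not_not] at hr
    simp only [hr, det_innerMatrix_eq_zero (hcons _), mul_zero, sub_zero]

theorem stdNInner_eq_det_innerMatrix (x y : X) (l : List X) :
    stdNInner x y l =
      (innerMatrix (Fin.cons x l.get : Fin (l.length + 1) → X) (Fin.cons y l.get)).det := by
  rw [← List.get_cons_eq_finCons, ← List.get_cons_eq_finCons]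
  rfl

theorem stdNInner_nil (x y : X) : stdNInner x y [] = ⟪x, y⟫_ℝ :=
  det_fin_one _

theorem stdNInner_cons_mul_det_gram (x y z : X) (l : List X) :
    stdNInner x y (z :: l) * (gram ℝ l.get).det =
      stdNInner x y l * stdNInner z z l - stdNInner x z l * stdNInner z y l := by
  simp only [stdNInner_eq_det_innerMatrix, List.get_cons_eq_finCons]
  exact det_innerMatrix_cons_cons_mul_det_gram x y z l.get

/-- `iter2Factor [x_{n-1}, …, x₂]` is the coefficient `Eₙ`. -/
noncomputable def iter2Factor (l : List X) : ℝ :=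
  ∏ i ∈ Finset.range l.length, stdNInner (l.getD i 0) (l.getD i 0) (l.drop (i + 1)) ^ 2 ^ i

theorem iter2Factor_nil : iter2Factor ([] : List X) = 1 := rfl

theorem iter2Factor_cons (w : X) (t : List X) :
    iter2Factor (w :: t) = stdNInner w w t * iter2Factor t ^ 2 := by
  simp only [iter2Factor, List.length_cons, Finset.prod_range_succ', List.getD_cons_succ,
    List.drop_succ_cons, List.getD_cons_zero, List.drop_zero, pow_zero, pow_one, pow_succ 2,
    pow_mul, ← Finset.prod_pow]
  ring

theorem iter2_cons_eq_iter2Factor_mul (x y z : X) (l : List X) :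
    iter2 x y (z :: l) = iter2Factor l * stdNInner x y (z :: l) := by
  induction l generalizing x y z with
  | nil =>
    have h := stdNInner_cons_mul_det_gram x y z []
    rw [det_fin_zero, mul_one] at h
    simp only [iter2, ← stdNInner_nil, h, iter2Factor_nil, one_mul]
  | cons w t ih =>
    have h := stdNInner_cons_mul_det_gram x y z (w :: t)
    have hgram : (gram ℝ (w :: t).get).det = stdNInner w w t := rfl
    rw [hgram] at h
    rw [iter2, ih, ih, ih, ih, iter2Factor_cons]
    linear_combination -iter2Factor t ^ 2 * h

end

/-- Representation of the `n`-iterated 2-inner product in terms of the standard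
`k`-inner products (`k ≤ n`): for conditioning vectors `xₙ, …, x₂` (a list of
length `n - 1 ≥ 1`),
`(x, y | xₙ, …, x₂)_* = Eₙ ⟨x, y | xₙ, …, x₂⟩`, where `E₂ = 1` and
`Eₙ = ∏_{k=2}^{n-1} ⟨xₖ, xₖ | x_{k-1}, …, x₂⟩^(2^(n-k-1))` for `n ≥ 3`.
Here the list `z :: l = [xₙ, …, x₂]`, so `xₖ` is the entry at position
`j = n - k` and `[x_{k-1}, …, x₂]` is what remains after dropping the first
`j + 1` entries; the exponent is `2^(n-k-1) = 2^(j-1)`. -/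
theorem iter2_eq_stdNInner_mul {X : Type*} [NormedAddCommGroup X] [InnerProductSpace ℝ X]
    (x y z : X) (l : List X) :
    iter2 x y (z :: l) =
      (∏ j ∈ Finset.Icc 1 l.length,
        (stdNInner ((z :: l).getD j 0) ((z :: l).getD j 0) ((z :: l).drop (j + 1)))
          ^ (2 ^ (j - 1)))
        * stdNInner x y (z :: l) := by
  rw [iter2_cons_eq_iter2Factor_mul, ← Finset.Ico_add_one_right_eq_Icc,
    Finset.prod_Ico_eq_prod_range, Nat.add_sub_cancel, iter2Factor]
  simp [Nat.add_comm 1]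
end

section
/- Let X be a real inner product space and x, y, v, z ∈ X. Then the 3-iterated 2-inner product satisfies (x,y|v,z)_* = ⟨z,z⟩ · ⟨x,y|v,z⟩, i.e. (x,y|v,z)_* equals ⟨z,z⟩ times the determinant of the 3×3 matrix with rows (⟨x,y⟩, ⟨x,v⟩, ⟨x,z⟩), (⟨v,y⟩, ⟨v,v⟩, ⟨v,z⟩), (⟨z,y⟩, ⟨z,v⟩, ⟨z,z⟩). -/
/-!
Unfolding the recursion once, `(x, y | v, z)_*` is the `2 × 2` determinant of the
one-step quantities `(a, b | z)_* = ⟪a, b⟫⟪z, z⟫ - ⟪a, z⟫⟪z, b⟫`, which are exactly the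
`2 × 2` minors of the `3 × 3` matrix that contain its corner entry `⟪z, z⟫`.
Chiò's condensation (the `3 × 3` case of Sylvester's determinant identity) says that
this determinant of minors is the corner entry times the full determinant.
-/

open scoped InnerProductSpace

theorem Matrix.mul_det_fin_three_eq_det_minors {R : Type*} [CommRing R]
    (A : Matrix (Fin 3) (Fin 3) R) :
    A 2 2 * A.det =
      (A 0 0 * A 2 2 - A 0 2 * A 2 0) * (A 1 1 * A 2 2 - A 1 2 * A 2 1) -
        (A 0 1 * A 2 2 - A 0 2 * A 2 1) * (A 1 0 * A 2 2 - A 1 2 * A 2 0) := by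
  rw [Matrix.det_fin_three]
  ring

theorem iter2_singleton {X : Type*} [NormedAddCommGroup X] [InnerProductSpace ℝ X]
    (x y z : X) : iter2 x y [z] = ⟪x, y⟫_ℝ * ⟪z, z⟫_ℝ - ⟪x, z⟫_ℝ * ⟪z, y⟫_ℝ :=
  rfl

/-- The 3-iterated 2-inner product in terms of the standard 3-inner product:
`(x, y | v, z)_* = ⟪z, z⟫ ⟨x, y | v, z⟩`, where `⟨x, y | v, z⟩` is the
determinant of the `3 × 3` matrix with rows `(⟪x,y⟫, ⟪x,v⟫, ⟪x,z⟫)`,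
`(⟪v,y⟫, ⟪v,v⟫, ⟪v,z⟫)`, `(⟪z,y⟫, ⟪z,v⟫, ⟪z,z⟫)`. -/
theorem iter2_three_eq {X : Type*} [NormedAddCommGroup X] [InnerProductSpace ℝ X]
    (x y v z : X) :
    iter2 x y [v, z] =
      ⟪z, z⟫_ℝ *
        Matrix.det !![⟪x, y⟫_ℝ, ⟪x, v⟫_ℝ, ⟪x, z⟫_ℝ;
                      ⟪v, y⟫_ℝ, ⟪v, v⟫_ℝ, ⟪v, z⟫_ℝ;
                      ⟪z, y⟫_ℝ, ⟪z, v⟫_ℝ, ⟪z, z⟫_ℝ] := by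
  rw [iter2, iter2_singleton, iter2_singleton, iter2_singleton, iter2_singleton]
  exact (Matrix.mul_det_fin_three_eq_det_minors
    !![⟪x, y⟫_ℝ, ⟪x, v⟫_ℝ, ⟪x, z⟫_ℝ; ⟪v, y⟫_ℝ, ⟪v, v⟫_ℝ, ⟪v, z⟫_ℝ; ⟪z, y⟫_ℝ, ⟪z, v⟫_ℝ, ⟪z, z⟫_ℝ]).symm
end

section
/- Let X be a real inner product space and x, y, v, w, z ∈ X. Then the 4-iterated 2-inner product satisfies (x,y|v,w,z)_* = ⟨z,z|w⟩ · ⟨z,z⟩² · ⟨x,y|v,w,z⟩, where ⟨z,z|w⟩ = ⟨z,z⟩⟨w,w⟩ − ⟨z,w⟩² and ⟨x,y|v,w,z⟩ is the determinant of the 4×4 matrix with rows (⟨x,y⟩, ⟨x,v⟩, ⟨x,w⟩, ⟨x,z⟩), (⟨v,y⟩, ⟨v,v⟩, ⟨v,w⟩, ⟨v,z⟩), (⟨w,y⟩, ⟨w,v⟩, ⟨w,w⟩, ⟨w,z⟩), (⟨z,y⟩, ⟨z,v⟩, ⟨z,w⟩, ⟨z,z⟩). -/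
open scoped InnerProductSpace

set_option maxHeartbeats 1000000 in
private lemma det_fin_four' (M : Matrix (Fin 4) (Fin 4) ℝ) :
    M.det =
      M 0 0 * M 1 1 * M 2 2 * M 3 3 - M 0 0 * M 1 1 * M 2 3 * M 3 2 -
        M 0 0 * M 1 2 * M 2 1 * M 3 3 + M 0 0 * M 1 2 * M 2 3 * M 3 1 +
        M 0 0 * M 1 3 * M 2 1 * M 3 2 - M 0 0 * M 1 3 * M 2 2 * M 3 1 -
        M 0 1 * M 1 0 * M 2 2 * M 3 3 + M 0 1 * M 1 0 * M 2 3 * M 3 2 +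
        M 0 1 * M 1 2 * M 2 0 * M 3 3 - M 0 1 * M 1 2 * M 2 3 * M 3 0 -
        M 0 1 * M 1 3 * M 2 0 * M 3 2 + M 0 1 * M 1 3 * M 2 2 * M 3 0 +
        M 0 2 * M 1 0 * M 2 1 * M 3 3 - M 0 2 * M 1 0 * M 2 3 * M 3 1 -
        M 0 2 * M 1 1 * M 2 0 * M 3 3 + M 0 2 * M 1 1 * M 2 3 * M 3 0 +
        M 0 2 * M 1 3 * M 2 0 * M 3 1 - M 0 2 * M 1 3 * M 2 1 * M 3 0 -
        M 0 3 * M 1 0 * M 2 1 * M 3 2 + M 0 3 * M 1 0 * M 2 2 * M 3 1 +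
        M 0 3 * M 1 1 * M 2 0 * M 3 2 - M 0 3 * M 1 1 * M 2 2 * M 3 0 -
        M 0 3 * M 1 2 * M 2 0 * M 3 1 + M 0 3 * M 1 2 * M 2 1 * M 3 0 := by
  have h3 : (2 : Fin 3).succ = 3 := rfl
  have h2 : (2 : Fin 3).castSucc = 2 := rfl
  have ha1 : (1 : Fin 4).succAbove 2 = 3 := rfl
  have ha2 : (2 : Fin 4).succAbove 2 = 3 := rfl
  have ha3 : (3 : Fin 4).succAbove 2 = 2 := rfl
  simp only [Matrix.det_succ_row_zero, Matrix.det_fin_three, Fin.sum_univ_succ,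
    Fin.sum_univ_zero, Matrix.submatrix_apply, Fin.succ_zero_eq_one, Fin.succ_one_eq_two,
    Fin.zero_succAbove, Fin.succ_succAbove_zero, Fin.succ_succAbove_one, Fin.val_zero,
    Fin.val_succ, Fin.succ_succAbove_succ, h3, h2, ha1, ha2, ha3, pow_succ, pow_zero]
  norm_num
  ring

set_option maxHeartbeats 2000000 in
/-- The 4-iterated 2-inner product in terms of the standard 4-inner product:
`(x, y | v, w, z)_* = ⟨z, z | w⟩ ⟪z, z⟫² ⟨x, y | v, w, z⟩`, where
`⟨z, z | w⟩ = ⟪z,z⟫⟪w,w⟫ - ⟪z,w⟫²` and `⟨x, y | v, w, z⟩` is the determinant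
of the `4 × 4` matrix with rows `(⟪x,y⟫, ⟪x,v⟫, ⟪x,w⟫, ⟪x,z⟫)`,
`(⟪v,y⟫, ⟪v,v⟫, ⟪v,w⟫, ⟪v,z⟫)`, `(⟪w,y⟫, ⟪w,v⟫, ⟪w,w⟫, ⟪w,z⟫)`,
`(⟪z,y⟫, ⟪z,v⟫, ⟪z,w⟫, ⟪z,z⟫)`. -/
theorem iter2_four_eq {X : Type*} [NormedAddCommGroup X] [InnerProductSpace ℝ X]
    (x y v w z : X) :
    iter2 x y [v, w, z] =
      (⟪z, z⟫_ℝ * ⟪w, w⟫_ℝ - ⟪z, w⟫_ℝ ^ 2) * ⟪z, z⟫_ℝ ^ 2 *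
        Matrix.det !![⟪x, y⟫_ℝ, ⟪x, v⟫_ℝ, ⟪x, w⟫_ℝ, ⟪x, z⟫_ℝ;
                      ⟪v, y⟫_ℝ, ⟪v, v⟫_ℝ, ⟪v, w⟫_ℝ, ⟪v, z⟫_ℝ;
                      ⟪w, y⟫_ℝ, ⟪w, v⟫_ℝ, ⟪w, w⟫_ℝ, ⟪w, z⟫_ℝ;
                      ⟪z, y⟫_ℝ, ⟪z, v⟫_ℝ, ⟪z, w⟫_ℝ, ⟪z, z⟫_ℝ] := by
  rw [det_fin_four']
  norm_num [Matrix.cons_val', Matrix.cons_val_zero, Matrix.cons_val_one,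
    Matrix.head_cons, Matrix.head_fin_const, Matrix.cons_val_fin_one, Matrix.empty_val',
    Matrix.cons_val_succ]
  simp only [Matrix.cons_val, ← real_inner_self_eq_norm_sq]
  simp only [iter2]
  rw [real_inner_comm v x, real_inner_comm w x, real_inner_comm z x,
    real_inner_comm w v, real_inner_comm z v, real_inner_comm z w,
    real_inner_comm y x, real_inner_comm y v, real_inner_comm y w, real_inner_comm y z]
  ring
end

section
/- (Lupu–Schwarz inequality) Let X be a real inner product space and x, w, z ∈ X. Then ‖x‖²⟨w,z⟩² + ‖w‖²⟨z,x⟩² + ‖z‖²⟨x,w⟩² ≤ ‖x‖²‖w‖²‖z‖² + 2⟨w,z⟩⟨z,x⟩⟨x,w⟩. -/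
open scoped InnerProductSpace

/-! The difference of the two sides is the determinant of the Gram matrix of `x, w, z`, which is
nonnegative because a Gram matrix is positive semidefinite. -/

/-- The Lupu–Schwarz inequality in a real inner product space:
`‖x‖²⟪w,z⟫² + ‖w‖²⟪z,x⟫² + ‖z‖²⟪x,w⟫² ≤ ‖x‖²‖w‖²‖z‖² + 2⟪w,z⟫⟪z,x⟫⟪x,w⟫`. -/
theorem lupu_schwarz {X : Type*} [NormedAddCommGroup X] [InnerProductSpace ℝ X]
    (x w z : X) :
    ‖x‖ ^ 2 * ⟪w, z⟫_ℝ ^ 2 + ‖w‖ ^ 2 * ⟪z, x⟫_ℝ ^ 2 + ‖z‖ ^ 2 * ⟪x, w⟫_ℝ ^ 2 ≤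
      ‖x‖ ^ 2 * ‖w‖ ^ 2 * ‖z‖ ^ 2 + 2 * ⟪w, z⟫_ℝ * ⟪z, x⟫_ℝ * ⟪x, w⟫_ℝ := by
  have hdet : 0 ≤ (Matrix.gram ℝ ![x, w, z]).det := (Matrix.posSemidef_gram ℝ _).det_nonneg
  simp only [Matrix.det_fin_three, Matrix.gram_apply, Matrix.cons_val_zero, Matrix.cons_val_one,
    Matrix.cons_val_two, Matrix.head_cons, Matrix.tail_cons, real_inner_self_eq_norm_sq] at hdet
  rw [real_inner_comm x w, real_inner_comm w z, real_inner_comm z x] at hdet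
  linear_combination hdet
end

section
/- Let X be a real inner product space and x, w, z ∈ X. Then the 3-iterated 2-inner product satisfies (x,x|w,z)_* = Γ(x,w,z) · ‖z‖², where Γ(x,w,z) is the Gram determinant of x, w, z, i.e. the determinant of the 3×3 matrix with rows (⟨x,x⟩, ⟨x,w⟩, ⟨x,z⟩), (⟨w,x⟩, ⟨w,w⟩, ⟨w,z⟩), (⟨z,x⟩, ⟨z,w⟩, ⟨z,z⟩). Consequently, (x,x|z,w)_* · ‖z‖² = (x,x|w,z)_* · ‖w‖². -/
open scoped InnerProductSpace

/-- The 3-iterated 2-inner product of `x` with itself equals the Gram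
determinant `Γ(x, w, z)` times `‖z‖²`; consequently
`(x, x | z, w)_* ‖z‖² = (x, x | w, z)_* ‖w‖²`. -/
theorem iter2_self_eq_gram_mul {X : Type*} [NormedAddCommGroup X] [InnerProductSpace ℝ X]
    (x w z : X) :
    iter2 x x [w, z] =
      Matrix.det !![⟪x, x⟫_ℝ, ⟪x, w⟫_ℝ, ⟪x, z⟫_ℝ;
                    ⟪w, x⟫_ℝ, ⟪w, w⟫_ℝ, ⟪w, z⟫_ℝ;
                    ⟪z, x⟫_ℝ, ⟪z, w⟫_ℝ, ⟪z, z⟫_ℝ] * ‖z‖ ^ 2 ∧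
    iter2 x x [z, w] * ‖z‖ ^ 2 = iter2 x x [w, z] * ‖w‖ ^ 2 := by
  simp [iter2, Matrix.det_fin_three,
    real_inner_comm w x, real_inner_comm z x, real_inner_comm z w,
    ← real_inner_self_eq_norm_sq, - inner_self_eq_norm_sq_to_K]
  constructor <;> ring
end
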